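/- arXiv:1501.00163 — 2 statements merged into one kernel-verified Lean document; each statement's English description precedes it below -/
import Mathlib

section
/- min{w^{(1)}, w^{(2)}, …, w^{(L)}} = d, where d is the code distance of the polynomial remainder code with moduli m_1(x), …, m_L(x) and, for each i, w^{(i)} is the code distance of the polynomial remainder code with the L−1 moduli Γ_{ji}(x) = m_j(x)/gcd(m_i(x), m_j(x)), j ≠ i. -/
/-!
Write `M = lcm m` and `Γ_{ji} = m_j / gcd(m_i, m_j)`. Since `m_j ∣ k m_i ↔ Γ_{ji} ∣ k`, the
polynomial `M` is associated to `m_i · lcm_{j ≠ i} Γ_{ji}`, and `k ↦ k m_i` is a weight-preserving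
bijection from the codewords of the `i`-th reduced code onto the codewords of the original code
that are divisible by `m_i`. Hence `d ≤ w⁽ⁱ⁾` for every `i`. Conversely, `m_1` is a codeword of
weight `< L`, so a codeword of minimal weight `d` is divisible by some `m_i`, and `w⁽ⁱ⁾ ≤ d`.
-/

open Polynomial
open scoped Classical

/-- The code distance of the polynomial remainder code with moduli `m i`, `i ∈ s`. -/
noncomputable def codeDist {F : Type*} [Field F] {ι : Type*} (s : Finset ι)
    (m : ι → Polynomial F) : ℕ :=
  sInf {k | ∃ a : Polynomial F, a ≠ 0 ∧ a.degree < (s.lcm m).degree ∧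
    (s.filter fun i => ¬ m i ∣ a).card = k}

theorem dvd_mul_iff_dvd_of_gcd_mul_eq {α : Type*} [CommMonoidWithZero α] [NormalizedGCDMonoid α]
    {a b c k : α} (ha : a ≠ 0) (hc : gcd a b * c = b) : b ∣ k * a ↔ c ∣ k := by
  have hg : gcd a b ≠ 0 := fun h => ha ((gcd_eq_zero_iff a b).1 h).1
  calc b ∣ k * a ↔ b ∣ k * gcd b a := dvd_mul_gcd_iff_dvd_mul.symm
    _ ↔ gcd a b * c ∣ gcd a b * k := by rw [hc, gcd_comm, mul_comm]
    _ ↔ c ∣ k := mul_dvd_mul_iff_left hg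

namespace Polynomial

variable {F : Type*} [Field F]

theorem gcd_mul_divByMonic_gcd {a : F[X]} (b : F[X]) (ha : a ≠ 0) :
    gcd a b * (b /ₘ gcd a b) = b := by
  have hg : gcd a b ≠ 0 := fun h => ha ((gcd_eq_zero_iff a b).1 h).1
  have hmonic : (gcd a b).Monic := normalize_gcd a b ▸ monic_normalize hg
  rw [divByMonic_eq_div b hmonic, EuclideanDomain.mul_div_cancel' hg (gcd_dvd_right a b)]

end Polynomial

section RemainderCode

variable {F : Type*} [Field F] {ι : Type*}

/-- The paper's `Γ_{ji}` is `reducedModulus m i j`. -/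
noncomputable def reducedModulus (m : ι → F[X]) (i j : ι) : F[X] :=
  m j /ₘ gcd (m i) (m j)

noncomputable def codeWeight (s : Finset ι) (m : ι → F[X]) (a : F[X]) : ℕ :=
  (s.filter fun i => ¬ m i ∣ a).card

variable {s : Finset ι} {m : ι → F[X]}

theorem codeDist_le_codeWeight {a : F[X]} (ha : a ≠ 0) (hdeg : a.degree < (s.lcm m).degree) :
    codeDist s m ≤ codeWeight s m a :=
  Nat.sInf_le ⟨a, ha, hdeg, rfl⟩

theorem exists_codeWeight_eq_codeDist (h : 0 < (s.lcm m).degree) :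
    ∃ a : F[X], a ≠ 0 ∧ a.degree < (s.lcm m).degree ∧ codeWeight s m a = codeDist s m := by
  have hne : Set.Nonempty
      {k | ∃ a : F[X], a ≠ 0 ∧ a.degree < (s.lcm m).degree ∧ codeWeight s m a = k} :=
    ⟨_, 1, one_ne_zero, by rwa [degree_one], rfl⟩
  exact Nat.sInf_mem hne

theorem codeWeight_lt_card {a : F[X]} {i : ι} (hi : i ∈ s) (hia : m i ∣ a) :
    codeWeight s m a < s.card :=
  Finset.card_lt_card (Finset.filter_ssubset.2 ⟨i, hi, not_not.2 hia⟩)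

theorem exists_dvd_of_codeWeight_lt_card {a : F[X]} (h : codeWeight s m a < s.card) :
    ∃ i ∈ s, m i ∣ a := by
  have hss := (Finset.filter_subset _ s).ssubset_of_ne fun he => h.ne (congrArg Finset.card he)
  simpa using Finset.filter_ssubset.1 hss

theorem dvd_mul_iff_reducedModulus_dvd {i : ι} (hi : m i ≠ 0) (j : ι) (k : F[X]) :
    m j ∣ k * m i ↔ reducedModulus m i j ∣ k :=
  dvd_mul_iff_dvd_of_gcd_mul_eq hi (gcd_mul_divByMonic_gcd _ hi)

variable [DecidableEq ι]

theorem codeWeight_mul_eq {i : ι} (hi : m i ≠ 0) (k : F[X]) :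
    codeWeight s m (k * m i) = codeWeight (s.erase i) (reducedModulus m i) k := by
  unfold codeWeight
  congr 1
  ext j
  rw [Finset.mem_filter, Finset.mem_filter, Finset.mem_erase]
  rcases eq_or_ne j i with rfl | hji
  · simp
  · rw [dvd_mul_iff_reducedModulus_dvd hi]
    simp [hji]

theorem associated_lcm_mul_lcm_reducedModulus {i : ι} (his : i ∈ s) (hi : m i ≠ 0) :
    Associated (s.lcm m) (m i * (s.erase i).lcm (reducedModulus m i)) := by
  obtain ⟨q, hq⟩ := Finset.dvd_lcm (f := m) his
  refine associated_of_dvd_dvd (Finset.lcm_dvd fun j hj => ?_) ?_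
  · rcases eq_or_ne j i with rfl | hji
    · exact dvd_mul_right _ _
    · rw [mul_comm, dvd_mul_iff_reducedModulus_dvd hi]
      exact Finset.dvd_lcm (Finset.mem_erase.2 ⟨hji, hj⟩)
  · rw [hq]
    refine mul_dvd_mul_left _ (Finset.lcm_dvd fun j hj => ?_)
    rw [← dvd_mul_iff_reducedModulus_dvd hi, mul_comm, ← hq]
    exact Finset.dvd_lcm (Finset.mem_of_mem_erase hj)

theorem degree_mul_lt_degree_lcm_iff {i : ι} (his : i ∈ s) (hi : m i ≠ 0) (k : F[X]) :
    (k * m i).degree < (s.lcm m).degree ↔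
      k.degree < ((s.erase i).lcm (reducedModulus m i)).degree := by
  rw [degree_eq_degree_of_associated (associated_lcm_mul_lcm_reducedModulus his hi),
    degree_mul, degree_mul, add_comm, WithBot.add_lt_add_iff_left (degree_ne_bot.2 hi)]

theorem codeDist_le_codeDist_erase {i : ι} (his : i ∈ s) (hi : m i ≠ 0)
    (hlt : (m i).degree < (s.lcm m).degree) :
    codeDist s m ≤ codeDist (s.erase i) (reducedModulus m i) := by
  have hpos : 0 < ((s.erase i).lcm (reducedModulus m i)).degree := by
    have h := (degree_mul_lt_degree_lcm_iff his hi 1).1 (by rwa [one_mul])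
    rwa [degree_one] at h
  obtain ⟨k, hk, hdeg, hw⟩ := exists_codeWeight_eq_codeDist hpos
  rw [← hw, ← codeWeight_mul_eq hi]
  exact codeDist_le_codeWeight (mul_ne_zero hk hi)
    ((degree_mul_lt_degree_lcm_iff his hi k).2 hdeg)

theorem codeDist_erase_le_codeWeight {i : ι} (his : i ∈ s) (hi : m i ≠ 0) {a : F[X]}
    (ha : a ≠ 0) (hdeg : a.degree < (s.lcm m).degree) (hia : m i ∣ a) :
    codeDist (s.erase i) (reducedModulus m i) ≤ codeWeight s m a := by
  obtain ⟨k, rfl⟩ := hia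
  rw [mul_comm] at ha hdeg ⊢
  rw [codeWeight_mul_eq hi]
  exact codeDist_le_codeWeight (left_ne_zero_of_mul ha)
    ((degree_mul_lt_degree_lcm_iff his hi k).1 hdeg)

theorem exists_codeDist_erase_le {i₀ : ι} (hi₀ : i₀ ∈ s) (hm : ∀ i ∈ s, m i ≠ 0)
    (hlt : (m i₀).degree < (s.lcm m).degree) :
    ∃ i ∈ s, codeDist (s.erase i) (reducedModulus m i) ≤ codeDist s m := by
  have hpos : 0 < (s.lcm m).degree := (zero_le_degree_iff.2 (hm i₀ hi₀)).trans_lt hlt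
  obtain ⟨a, ha, hdeg, hw⟩ := exists_codeWeight_eq_codeDist hpos
  -- `m i₀` is itself a codeword, of weight less than `|s|`
  have hcard : codeWeight s m a < s.card := hw ▸
    (codeDist_le_codeWeight (hm i₀ hi₀) hlt).trans_lt (codeWeight_lt_card hi₀ dvd_rfl)
  obtain ⟨i, his, hia⟩ := exists_dvd_of_codeWeight_lt_card hcard
  exact ⟨i, his, hw ▸ codeDist_erase_le_codeWeight his (hm i his) ha hdeg hia⟩

end RemainderCode

theorem stmt8_general {F : Type*} [Field F] {L : ℕ} (hL : 2 ≤ L)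
    (m : Fin L → Polynomial F)
    (hmonic : ∀ i, (m i).Monic)
    (hm_lt : ∀ i, (m i).degree < (Finset.univ.lcm m).degree) :
    sInf (Set.range fun i : Fin L =>
        codeDist (Finset.univ.erase i) (fun j => m j /ₘ gcd (m i) (m j))) =
      codeDist Finset.univ m := by
  change sInf (Set.range fun i => codeDist (Finset.univ.erase i) (reducedModulus m i)) = _
  have hm : ∀ i, m i ≠ 0 := fun i => (hmonic i).ne_zero
  let i₀ : Fin L := ⟨0, by omega⟩
  obtain ⟨i, -, hi⟩ := exists_codeDist_erase_le (Finset.mem_univ i₀) (fun i _ => hm i) (hm_lt i₀)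
  refine le_antisymm ((Nat.sInf_le (Set.mem_range_self i)).trans hi)
    (le_csInf ⟨_, Set.mem_range_self i₀⟩ ?_)
  rintro _ ⟨j, rfl⟩
  exact codeDist_le_codeDist_erase (Finset.mem_univ j) (hm j) (hm_lt j)

/-- `min{w⁽¹⁾, …, w⁽ᴸ⁾} = d`, where `w⁽ⁱ⁾` is the code distance of the
polynomial remainder code with the `L−1` moduli `Γ_{ji} = m_j / gcd(m_i, m_j)`,
`j ≠ i`, and `d` is the code distance of the code with moduli `m_1, …, m_L`. -/
theorem stmt8 {F : Type*} [Field F] {L : ℕ} (hL : 2 ≤ L)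
    (m : Fin L → Polynomial F)
    (hmonic : ∀ i, (m i).Monic)
    (hdist : Function.Injective m)
    (hdeg : ∀ i, 0 < (m i).degree)
    (hm_lt : ∀ i, (m i).degree < (Finset.univ.lcm m).degree) :
    sInf (Set.range fun i : Fin L =>
        codeDist (Finset.univ.erase i) (fun j => m j /ₘ gcd (m i) (m j))) =
      codeDist Finset.univ m :=
  stmt8_general hL m hmonic hm_lt
end

section
/- Let i ∈ {2, …, L}, let d_{1i}(x) = gcd(m_1(x), m_i(x)) (taken monic), Γ_{1i}(x) = m_1(x)/d_{1i}(x), and Γ_{i1}(x) = m_i(x)/d_{1i}(x). Let a(x) ∈ F[x] and let k_1(x) = (a(x) − [a]_{m_1}(x))/m_1(x) be its folding polynomial with respect to m_1(x). Then d_{1i}(x) divides [a]_{m_i}(x) − [a]_{m_1}(x), and with q_{i1}(x) = ([a]_{m_i}(x) − [a]_{m_1}(x))/d_{1i}(x) one has k_1(x)·Γ_{1i}(x) ≡ q_{i1}(x) (mod Γ_{i1}(x)); consequently, for every Γ̄_{1i}(x) ∈ F[x] with Γ̄_{1i}(x)·Γ_{1i}(x) ≡ 1 (mod Γ_{i1}(x)),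 it holds that k_1(x) ≡ q_{i1}(x)·Γ̄_{1i}(x) (mod Γ_{i1}(x)). -/
/-!
Both `a - [a]_{m₁}` and `a - [a]_{mᵢ}` are multiples of `d = gcd(m₁, mᵢ)`, hence so is their
difference `[a]_{mᵢ} - [a]_{m₁}`. Subtracting `d q = [a]_{mᵢ} - [a]_{m₁}` from
`d Γ₁ᵢ k₁ = m₁ k₁ = a - [a]_{m₁}` leaves `a - [a]_{mᵢ}`, a multiple of `mᵢ = d Γᵢ₁`;
cancelling `d` gives `Γᵢ₁ ∣ k₁ Γ₁ᵢ - q`, and multiplying by the inverse `Γ̄₁ᵢ` solves for `k₁`.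
-/

open Polynomial
open scoped Classical

section Congruence

variable {R : Type*} [CommRing R]

theorem dvd_mul_sub_of_mul_eq_sub [IsDomain R] {d g₁ gᵢ k q a r₁ rᵢ : R} (hd : d ≠ 0)
    (hk : d * g₁ * k = a - r₁) (hq : d * q = rᵢ - r₁) (hi : d * gᵢ ∣ a - rᵢ) :
    gᵢ ∣ k * g₁ - q := by
  obtain ⟨t, ht⟩ := hi
  exact ⟨t, mul_left_cancel₀ hd (by linear_combination hk - hq + ht)⟩

theorem dvd_sub_mul_of_dvd_mul_sub_one {n k g g' q : R} (hk : n ∣ k * g - q)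
    (hg : n ∣ g' * g - 1) : n ∣ k - q * g' := by
  obtain ⟨u, hu⟩ := hk
  obtain ⟨v, hv⟩ := hg
  exact ⟨g' * u - k * v, by linear_combination g' * hu - k * hv⟩

end Congruence

namespace Polynomial

variable {R : Type*} [CommRing R]

theorem dvd_sub_modByMonic (p q : R[X]) : q ∣ p - p %ₘ q :=
  ⟨p /ₘ q, by rw [modByMonic_eq_sub_mul_div, sub_sub_cancel]⟩

theorem mul_divByMonic_of_dvd {p q : R[X]} (hq : q.Monic) (h : q ∣ p) : q * (p /ₘ q) = p := by
  obtain ⟨r, rfl⟩ := h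
  rw [mul_divByMonic_cancel_left _ hq]

theorem dvd_modByMonic_sub_modByMonic (a : R[X]) {d p q : R[X]} (hp : d ∣ p) (hq : d ∣ q) :
    d ∣ a %ₘ q - a %ₘ p := by
  simpa only [sub_sub_sub_cancel_left] using
    dvd_sub (hp.trans (dvd_sub_modByMonic a p)) (hq.trans (dvd_sub_modByMonic a q))

theorem monic_gcd_of_left {K : Type*} [Field K] {p : K[X]} (q : K[X]) (hp : p.Monic) :
    (gcd p q).Monic := by
  simpa only [normalize_gcd] using monic_normalize (gcd_ne_zero_of_left hp.ne_zero)

end Polynomial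

/-- with `d_{1i} = gcd(m_1, m_i)`, `Γ_{1i} = m_1/d_{1i}`,
`Γ_{i1} = m_i/d_{1i}`, and `k_1` the folding polynomial of `a` with respect to
`m_1`: `d_{1i}` divides `[a]_{m_i} − [a]_{m_1}`, the quotient
`q_{i1} = ([a]_{m_i} − [a]_{m_1})/d_{1i}` satisfies
`k_1·Γ_{1i} ≡ q_{i1} (mod Γ_{i1})`, and hence for any modular inverse `Γ̄_{1i}` of
`Γ_{1i}` modulo `Γ_{i1}` one has `k_1 ≡ q_{i1}·Γ̄_{1i} (mod Γ_{i1})`. -/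
theorem stmt16 {F : Type*} [Field F] {L : ℕ} (hL : 2 ≤ L)
    (m : Fin L → Polynomial F)
    (hmonic : ∀ i, (m i).Monic)
    (i : Fin L)
    (a : Polynomial F)
    (k1 : Polynomial F)
    (hk1 : k1 = (a - a %ₘ m ⟨0, by omega⟩) /ₘ m ⟨0, by omega⟩) :
    gcd (m ⟨0, by omega⟩) (m i) ∣ (a %ₘ m i - a %ₘ m ⟨0, by omega⟩) ∧
    (∀ q : Polynomial F,
      q = (a %ₘ m i - a %ₘ m ⟨0, by omega⟩) /ₘ gcd (m ⟨0, by omega⟩) (m i) →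
      (m i /ₘ gcd (m ⟨0, by omega⟩) (m i)) ∣
        (k1 * (m ⟨0, by omega⟩ /ₘ gcd (m ⟨0, by omega⟩) (m i)) - q) ∧
      ∀ Γbar : Polynomial F,
        (m i /ₘ gcd (m ⟨0, by omega⟩) (m i)) ∣
          (Γbar * (m ⟨0, by omega⟩ /ₘ gcd (m ⟨0, by omega⟩) (m i)) - 1) →
        (m i /ₘ gcd (m ⟨0, by omega⟩) (m i)) ∣ (k1 - q * Γbar)) := by
  set m₁ := m ⟨0, by omega⟩
  have hd : (gcd m₁ (m i)).Monic := monic_gcd_of_left _ (hmonic _)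
  have hdiff := dvd_modByMonic_sub_modByMonic a (gcd_dvd_left m₁ (m i)) (gcd_dvd_right m₁ (m i))
  refine ⟨hdiff, fun q hq => ?_⟩
  have hcong : (m i /ₘ gcd m₁ (m i)) ∣ k1 * (m₁ /ₘ gcd m₁ (m i)) - q := by
    refine dvd_mul_sub_of_mul_eq_sub (a := a) (r₁ := a %ₘ m₁) (rᵢ := a %ₘ m i) hd.ne_zero ?_ ?_ ?_
    · rw [mul_divByMonic_of_dvd hd (gcd_dvd_left _ _), hk1,
        mul_divByMonic_of_dvd (hmonic _) (dvd_sub_modByMonic _ _)]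
    · rw [hq, mul_divByMonic_of_dvd hd hdiff]
    · rw [mul_divByMonic_of_dvd hd (gcd_dvd_right _ _)]
      exact dvd_sub_modByMonic a (m i)
  exact ⟨hcong, fun Γbar hΓbar => dvd_sub_mul_of_dvd_mul_sub_one hcong hΓbar⟩
end
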